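/- Let H be a standard subspace with modular operator Δ_H, and set ℋ_{H,+} = Dom(Δ_H^{1/2}) with inner product ⟨φ,ψ⟩_+ = ⟨(1+Δ_H)^{1/2}φ, (1+Δ_H)^{1/2}ψ⟩. For a real subspace K ⊆ H, the orthogonal complement of K in ℋ_{H,+} equals ℂ[K^{⊥_ℝ} ∩ H] = (K^{⊥_ℝ} ∩ H) + i(K^{⊥_ℝ} ∩ H). -/

import Mathlib

open Complex Submodule Filter Topology

variable {E : Type*} [NormedAddCommGroup E] [InnerProductSpace ℂ E]

/-- Multiplication by `i` as a real-linear map. -/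
noncomputable def mulI (E : Type*) [NormedAddCommGroup E] [InnerProductSpace ℂ E] :
    E →ₗ[ℝ] E where
  toFun x := (Complex.I : ℂ) • x
  map_add' := fun x y => smul_add Complex.I x y
  map_smul' := fun r x => smul_comm Complex.I r x

/-- `H + iH` as a real submodule. -/
noncomputable def cspan (H : Submodule ℝ E) : Submodule ℝ E := H ⊔ H.map (mulI E)

/-- The symplectic complement `K' = {v : Im ⟨v, k⟩ = 0 ∀ k ∈ K}`. -/
noncomputable def sympl (K : Submodule ℝ E) : Submodule ℝ E where
  carrier := {v : E | ∀ k ∈ K, (inner ℂ v k : ℂ).im = 0}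
  add_mem' := by
    intro a b ha hb k hk
    simp only [Set.mem_setOf_eq] at *
    rw [inner_add_left, Complex.add_im, ha k hk, hb k hk, add_zero]
  zero_mem' := by intro k hk; simp
  smul_mem' := by
    intro c v hv k hk
    simp only [Set.mem_setOf_eq] at *
    have h : (c • v : E) = ((c : ℂ)) • v := by
      simp [Complex.coe_smul]
    rw [h, inner_smul_left]
    simp [hv k hk]

/-- The real-orthogonal complement `{v : Re ⟨v, k⟩ = 0 ∀ k ∈ K}`. -/
noncomputable def realPerp (K : Submodule ℝ E) : Submodule ℝ E where
  carrier := {v : E | ∀ k ∈ K, (inner ℂ v k : ℂ).re = 0}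
  add_mem' := by
    intro a b ha hb k hk
    simp only [Set.mem_setOf_eq] at *
    rw [inner_add_left, Complex.add_re, ha k hk, hb k hk, add_zero]
  zero_mem' := by intro k hk; simp
  smul_mem' := by
    intro c v hv k hk
    simp only [Set.mem_setOf_eq] at *
    have h : (c • v : E) = ((c : ℂ)) • v := by
      simp [Complex.coe_smul]
    rw [h, inner_smul_left]
    simp [hv k hk]

/-- A standard subspace: closed, cyclic and separating real subspace. -/
structure IsStandardSubspace (H : Submodule ℝ E) : Prop where
  isClosed : IsClosed (H : Set E)
  cyclic : Dense ((cspan H : Submodule ℝ E) : Set E)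
  separating : H ⊓ H.map (mulI E) = ⊥

/-- Scalar multiplication by a complex number as a real-linear map. -/
noncomputable def smulC (E : Type*) [NormedAddCommGroup E] [InnerProductSpace ℂ E]
    (mu : ℂ) : E →ₗ[ℝ] E where
  toFun x := mu • x
  map_add' := fun x y => smul_add mu x y
  map_smul' := fun r x => smul_comm mu r x

@[simp]
lemma mulI_apply (x : E) : mulI E x = I • x := rfl

lemma mem_realPerp {K : Submodule ℝ E} {v : E} :
    v ∈ realPerp K ↔ ∀ k ∈ K, (inner ℂ v k).re = 0 :=
  Iff.rfl

lemma mem_cspan_iff {H : Submodule ℝ E} {v : E} :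
    v ∈ cspan H ↔ ∃ h₁ ∈ H, ∃ h₂ ∈ H, h₁ + I • h₂ = v := by
  simp only [cspan, Submodule.mem_sup, Submodule.mem_map, mulI_apply]
  constructor
  · rintro ⟨h₁, hh₁, _, ⟨h₂, hh₂, rfl⟩, rfl⟩
    exact ⟨h₁, hh₁, h₂, hh₂, rfl⟩
  · rintro ⟨h₁, hh₁, h₂, hh₂, rfl⟩
    exact ⟨h₁, hh₁, _, ⟨h₂, hh₂, rfl⟩, rfl⟩

lemma inner_add_I_smul_add_inner_sub_I_smul (h₁ h₂ k : E) :
    inner ℂ (h₁ + I • h₂) k + inner ℂ k (h₁ - I • h₂)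
      = 2 * ((inner ℂ h₁ k).re - (inner ℂ h₂ k).re * I : ℂ) := by
  have hre (x : E) : (inner ℂ k x).re = (inner ℂ x k).re := inner_re_symm (𝕜 := ℂ) k x
  have him (x : E) : (inner ℂ k x).im = -(inner ℂ x k).im := inner_im_symm (𝕜 := ℂ) k x
  rw [inner_add_left, inner_smul_left, inner_sub_right, inner_smul_right]
  simp only [Complex.ext_iff, add_re, add_im, sub_re, sub_im, mul_re, mul_im, conj_re, conj_im,
    I_re, I_im, ofReal_re, ofReal_im, re_ofNat, im_ofNat, hre, him]
  constructor <;> ring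

lemma inner_add_I_smul_add_inner_sub_I_smul_eq_zero_iff (h₁ h₂ k : E) :
    inner ℂ (h₁ + I • h₂) k + inner ℂ k (h₁ - I • h₂) = 0 ↔
      (inner ℂ h₁ k).re = 0 ∧ (inner ℂ h₂ k).re = 0 := by
  rw [inner_add_I_smul_add_inner_sub_I_smul, Complex.ext_iff]
  simp

/-- The graph inner product `⟨φ,ψ⟩₊ = ⟨φ,ψ⟩ + ⟨Δ^{1/2}φ, Δ^{1/2}ψ⟩` is written as
`⟨φ,ψ⟩ + ⟨S ψ, S φ⟩`, using `S = J Δ^{1/2}` with `J` antiunitary. -/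
theorem stmt11_general {E : Type*} [NormedAddCommGroup E] [InnerProductSpace ℂ E]
    (H : Submodule ℝ E)
    (S : E → E)
    (hS : ∀ h₁ ∈ H, ∀ h₂ ∈ H, S (h₁ + Complex.I • h₂) = h₁ - Complex.I • h₂)
    (K : Submodule ℝ E) (hKH : K ≤ H) :
    {v : E | v ∈ (cspan H : Submodule ℝ E) ∧
        ∀ k ∈ K, (inner ℂ v k : ℂ) + (inner ℂ (S k) (S v) : ℂ) = 0}
      = ((cspan (realPerp K ⊓ H) : Submodule ℝ E) : Set E) := by
  have hSK : ∀ k ∈ K, S k = k := fun k hk => by simpa using hS k (hKH hk) 0 H.zero_mem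
  ext v
  simp only [Set.mem_ofPred_eq, SetLike.mem_coe, mem_cspan_iff, Submodule.mem_inf, mem_realPerp]
  constructor
  · rintro ⟨⟨h₁, hh₁, h₂, hh₂, rfl⟩, hv⟩
    have hperp k (hk : k ∈ K) := (inner_add_I_smul_add_inner_sub_I_smul_eq_zero_iff h₁ h₂ k).1
      (by simpa only [hSK k hk, hS h₁ hh₁ h₂ hh₂] using hv k hk)
    exact ⟨h₁, ⟨fun k hk => (hperp k hk).1, hh₁⟩, h₂, ⟨fun k hk => (hperp k hk).2, hh₂⟩, rfl⟩
  · rintro ⟨h₁, ⟨hp₁, hh₁⟩, h₂, ⟨hp₂, hh₂⟩, rfl⟩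
    refine ⟨⟨h₁, hh₁, h₂, hh₂, rfl⟩, fun k hk => ?_⟩
    rw [hSK k hk, hS h₁ hh₁ h₂ hh₂]
    exact (inner_add_I_smul_add_inner_sub_I_smul_eq_zero_iff h₁ h₂ k).2 ⟨hp₁ k hk, hp₂ k hk⟩

/-- In the graph inner product `⟨φ,ψ⟩₊ = ⟨φ,ψ⟩ + ⟨Δ^{1/2}φ, Δ^{1/2}ψ⟩
= ⟨φ,ψ⟩ + ⟨S ψ, S φ⟩` on `ℋ₊ = H + iH`, the orthogonal complement of a real
subspace `K ⊆ H` equals `ℂ[K^{⊥ᵣ} ∩ H]`. -/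
theorem stmt11 {E : Type*} [NormedAddCommGroup E] [InnerProductSpace ℂ E] [CompleteSpace E]
    (H : Submodule ℝ E) (hH : IsStandardSubspace H)
    (S : E → E)
    (hS : ∀ h₁ ∈ H, ∀ h₂ ∈ H, S (h₁ + Complex.I • h₂) = h₁ - Complex.I • h₂)
    (K : Submodule ℝ E) (hKH : K ≤ H) :
    {v : E | v ∈ (cspan H : Submodule ℝ E) ∧
        ∀ k ∈ K, (inner ℂ v k : ℂ) + (inner ℂ (S k) (S v) : ℂ) = 0}
      = ((cspan (realPerp K ⊓ H) : Submodule ℝ E) : Set E) :=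
  stmt11_general H S hS K hKH
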